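/- arXiv:math/9912238 — 3 statements merged into one kernel-verified Lean document; each statement's English description precedes it below -/
import Mathlib

section
/- Let p and q be distinct points of the unit sphere of ℂ², and let M = {p + t • (q − p) : t ∈ ℂ} be the complex affine line through p and q. Then the (metric) diameter of M ∩ {x ∈ ℂ² : ‖x‖ = 1} equals 2 · |⟪q − p, p⟫_ℂ| / ‖q − p‖. -/
local notation "⟪" x ", " y "⟫" => @inner ℂ (EuclideanSpace ℂ (Fin 2)) _ x y

/-! Write the line through `p` with direction `v` as `m + s • u`, where `u = v / ‖v‖` and `m` is the
foot of the perpendicular from the origin, so that `⟪m, u⟫ = 0`. By Pythagoras, `‖m + s • u‖² = ‖m‖² + ‖s‖²`,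
so the line meets the sphere through `p` exactly where `‖s‖ = ‖⟪u, p⟫‖`, a circle about `m`.
As `s ↦ m + s • u` is an isometry, its diameter is `2 ‖⟪u, p⟫‖ = 2 ‖⟪v, p⟫‖ / ‖v‖`. -/

open Set Metric

section LineSphere

variable {𝕜 E : Type*} [RCLike 𝕜] [NormedAddCommGroup E] [InnerProductSpace 𝕜 E]

theorem isometry_add_smul_of_norm_eq_one (m : E) {u : E} (hu : ‖u‖ = 1) :
    Isometry fun s : 𝕜 => m + s • u :=
  Isometry.of_dist_eq fun s t => by
    rw [dist_eq_norm, dist_eq_norm, add_sub_add_left_eq_sub, ← sub_smul, norm_smul, hu, mul_one]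

variable {m u : E}

theorem norm_add_smul_eq_norm_add_smul_iff (hmu : inner 𝕜 m u = 0) (hu : ‖u‖ = 1) {s s₀ : 𝕜} :
    ‖m + s • u‖ = ‖m + s₀ • u‖ ↔ ‖s‖ = ‖s₀‖ := by
  have pythagoras (s : 𝕜) : ‖m + s • u‖ * ‖m + s • u‖ = ‖m‖ * ‖m‖ + ‖s‖ * ‖s‖ := by
    rw [norm_add_sq_eq_norm_sq_add_norm_sq_of_inner_eq_zero (𝕜 := 𝕜) _ _
      (by rw [inner_smul_right, hmu, mul_zero]), norm_smul, hu, mul_one]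
  rw [← mul_self_inj (norm_nonneg _) (norm_nonneg _), pythagoras, pythagoras, add_right_inj,
    mul_self_inj (norm_nonneg _) (norm_nonneg _)]

theorem range_add_smul_inter_sphere_of_inner_eq_zero (hmu : inner 𝕜 m u = 0) (hu : ‖u‖ = 1)
    (s₀ : 𝕜) :
    range (fun s : 𝕜 => m + s • u) ∩ sphere 0 ‖m + s₀ • u‖ =
      (fun s : 𝕜 => m + s • u) '' sphere 0 ‖s₀‖ := by
  ext x
  simp only [mem_inter_iff, mem_range, mem_image, mem_sphere_zero_iff_norm]
  constructor
  · rintro ⟨⟨s, rfl⟩, hs⟩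
    exact ⟨s, (norm_add_smul_eq_norm_add_smul_iff hmu hu).mp hs, rfl⟩
  · rintro ⟨s, hs, rfl⟩
    exact ⟨⟨s, rfl⟩, (norm_add_smul_eq_norm_add_smul_iff hmu hu).mpr hs⟩

theorem diam_range_add_smul_inter_sphere_of_inner_eq_zero (hmu : inner 𝕜 m u = 0)
    (hu : ‖u‖ = 1) (s₀ : 𝕜) :
    diam (range (fun s : 𝕜 => m + s • u) ∩ sphere 0 ‖m + s₀ • u‖) = 2 * ‖s₀‖ := by
  rw [range_add_smul_inter_sphere_of_inner_eq_zero hmu hu,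
    (isometry_add_smul_of_norm_eq_one m hu).diam_image,
    diam_sphere_eq 0 (norm_nonneg _)]

theorem diam_range_add_smul_inter_sphere (p : E) {v : E} (hv : v ≠ 0) :
    diam (range (fun t : 𝕜 => p + t • v) ∩ sphere 0 ‖p‖) = 2 * ‖inner 𝕜 v p‖ / ‖v‖ := by
  have hv_norm : (‖v‖ : 𝕜) ≠ 0 := by simpa using hv
  set u : E := (‖v‖⁻¹ : 𝕜) • v
  set c : 𝕜 := inner 𝕜 u p
  set m : E := p - c • u
  have hu : ‖u‖ = 1 := norm_smul_inv_norm hv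
  have hmu : inner 𝕜 m u = 0 := by
    rw [inner_sub_left, inner_smul_left, inner_self_eq_one_of_norm_eq_one hu, mul_one,
      inner_conj_symm, sub_self]
  have hline : range (fun t : 𝕜 => p + t • v) = range fun s : 𝕜 => m + s • u := by
    ext x
    constructor
    · rintro ⟨t, rfl⟩
      refine ⟨c + t * ‖v‖, ?_⟩
      simp only [m, u]
      match_scalars <;> field_simp
      ring
    · rintro ⟨s, rfl⟩
      refine ⟨(s - c) / ‖v‖, ?_⟩
      simp only [m, u]
      match_scalars <;> ring
  have hc : ‖c‖ = ‖inner 𝕜 v p‖ / ‖v‖ := by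
    simp only [c, u]
    rw [inner_smul_left, norm_mul, RCLike.norm_conj, norm_inv, RCLike.norm_ofReal, abs_norm,
      inv_mul_eq_div]
  rw [hline, mul_div_assoc, ← hc, ← diam_range_add_smul_inter_sphere_of_inner_eq_zero hmu hu c,
    sub_add_cancel]

end LineSphere

theorem stmt3_general (p q : EuclideanSpace ℂ (Fin 2)) (hp : ‖p‖ = 1)
    (hpq : p ≠ q) :
    Metric.diam
        ({x : EuclideanSpace ℂ (Fin 2) | ∃ t : ℂ, x = p + t • (q - p)} ∩ {x | ‖x‖ = 1})
      = 2 * ‖⟪q - p, p⟫‖ / ‖q - p‖ := by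
  have hline : {x | ∃ t : ℂ, x = p + t • (q - p)} = range fun t : ℂ => p + t • (q - p) := by
    ext x
    exact exists_congr fun t => eq_comm
  have hsphere : {x : EuclideanSpace ℂ (Fin 2) | ‖x‖ = 1} = sphere 0 ‖p‖ := by
    ext x
    simp [hp]
  rw [hline, hsphere, diam_range_add_smul_inter_sphere p (sub_ne_zero.mpr hpq.symm)]

/-- For distinct `p, q ∈ S³ ⊆ ℂ²`, the euclidean diameter of the intersection of the
complex affine line `M(p,q) = {p + t • (q - p) : t ∈ ℂ}` with the unit sphere equals
`2 |⟪q - p, p⟫_ℂ| / ‖q - p‖`. -/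
theorem stmt3 (p q : EuclideanSpace ℂ (Fin 2)) (hp : ‖p‖ = 1) (hq : ‖q‖ = 1)
    (hpq : p ≠ q) :
    Metric.diam
        ({x : EuclideanSpace ℂ (Fin 2) | ∃ t : ℂ, x = p + t • (q - p)} ∩ {x | ‖x‖ = 1})
      = 2 * ‖⟪q - p, p⟫‖ / ‖q - p‖ :=
  stmt3_general p q hp hpq
end

section
/- Let γ : ℝ → ℂ² be a continuously differentiable map such that γ(s + 1) = γ(s) for all s, γ is injective on the interval [0, 1), ‖γ(s)‖ = 1 for all s, γ′(s) ≠ 0 for all s, and ⟪γ(s), γ′(s)⟫_ℂ = 0 for all s (γ is a Legendrian knot parametrization). Then for every ε > 0 there exists δ > 0 such that for all s, t ∈ ℝ, if ‖γ(s) − γ(t)‖ < δ then Metric.diam((affine ℂ-span of {γ(s), γ(t)}) ∩ {x ∈ ℂ² : ‖x‖ = 1}) < ε. -/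
local notation "⟪" x ", " y "⟫" => @inner ℂ (EuclideanSpace ℂ (Fin 2)) _ x y

open Set Function
open scoped InnerProductSpace

/-! The complex line through two points `p, q` of the unit sphere meets the sphere in a circle of
diameter at most `4 ‖⟪p, q - p⟫‖ / ‖q - p‖`, and `⟪p, q - p⟫ = ⟪p, q⟫ - 1` has real part
`-‖q - p‖² / 2`, so it suffices that `Im ⟪γ s, γ t⟫ = o(‖γ t - γ s‖)`. Since `γ` descends to an
embedding of the circle, `γ t` close to `γ s` forces `t` close to `s` modulo `1`. There the
Legendrian condition kills the first-order term, so `Im ⟪γ s, γ t⟫` is bounded by the first-order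
Taylor remainder of `γ` at `s`, which is `o(|t - s|)`, hence `o(‖γ t - γ s‖)` as `γ` is an
immersion. -/

theorem Continuous.exists_pos_forall_dist_lt_of_injective {X Y : Type*} [MetricSpace X]
    [CompactSpace X] [MetricSpace Y] {g : X → Y} (hg : Continuous g) (hinj : Injective g)
    {r : ℝ} (hr : 0 < r) :
    ∃ δ > 0, ∀ x y, dist (g x) (g y) < δ → dist x y < r := by
  let e := (hg.isClosedEmbedding hinj).isEmbedding.toHomeomorph
  have : CompactSpace (range g) := isCompact_iff_compactSpace.mp (isCompact_range hg)
  obtain ⟨δ, hδ, h⟩ := Metric.uniformContinuous_iff.mp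
    (CompactSpace.uniformContinuous_of_continuous e.symm.continuous) r hr
  exact ⟨δ, hδ, fun x y hxy => by simpa using h (a := e x) (b := e y) hxy⟩

namespace Function.Periodic

variable {α : Type*} {f : ℝ → α}

theorem continuous_lift [TopologicalSpace α] (hp : Periodic f 1) (hf : Continuous f) :
    Continuous (hp.lift : UnitAddCircle → α) :=
  continuous_coinduced_dom.mpr hf

theorem injective_lift (hp : Periodic f 1) (hinj : InjOn f (Ico 0 1)) :
    Injective (hp.lift : UnitAddCircle → α) := by
  have hIco : ∀ x : UnitAddCircle, ∃ a ∈ Ico (0 : ℝ) 1, (a : UnitAddCircle) = x := fun x => by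
    simpa using (AddCircle.coe_image_Ico_eq (1 : ℝ) 0).superset (mem_univ x)
  intro x y hxy
  obtain ⟨a, ha, rfl⟩ := hIco x
  obtain ⟨b, hb, rfl⟩ := hIco y
  rw [hp.lift_coe, hp.lift_coe] at hxy
  rw [hinj ha hb hxy]

theorem uniformContinuous [UniformSpace α] (hp : Periodic f 1) (hf : Continuous f) :
    UniformContinuous f := by
  have hmk : LipschitzWith 1 ((↑) : ℝ → UnitAddCircle) :=
    LipschitzWith.of_dist_le_mul fun a b => by
      rw [NNReal.coe_one, one_mul, dist_eq_norm, dist_eq_norm, ← AddCircle.coe_sub]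
      exact QuotientAddGroup.norm_mk_le_norm
  exact (CompactSpace.uniformContinuous_of_continuous (hp.continuous_lift hf)).comp
    hmk.uniformContinuous

theorem exists_pos_forall_abs_sub_round_lt [MetricSpace α] (hp : Periodic f 1) (hf : Continuous f)
    (hinj : InjOn f (Ico 0 1)) {r : ℝ} (hr : 0 < r) :
    ∃ δ > 0, ∀ s t, dist (f s) (f t) < δ → |s - t - round (s - t)| < r := by
  obtain ⟨δ, hδ, h⟩ :=
    (hp.continuous_lift hf).exists_pos_forall_dist_lt_of_injective (hp.injective_lift hinj) hr
  refine ⟨δ, hδ, fun s t hst => ?_⟩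
  have := h s t (by rwa [hp.lift_coe, hp.lift_coe])
  rwa [dist_eq_norm, ← AddCircle.coe_sub, UnitAddCircle.norm_eq] at this

theorem deriv {F : Type*} [NormedAddCommGroup F] [NormedSpace ℝ F] {f : ℝ → F} {c : ℝ}
    (hp : Periodic f c) : Periodic (deriv f) c := fun x => by
  rw [← deriv_comp_add_const, funext hp]

theorem exists_pos_le_norm {F : Type*} [NormedAddCommGroup F] {f : ℝ → F} {c : ℝ}
    (hp : Periodic f c) (hc : c ≠ 0) (hf : Continuous f) (h0 : ∀ x, f x ≠ 0) :
    ∃ m > 0, ∀ x, m ≤ ‖f x‖ := by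
  obtain ⟨_, ⟨x₀, rfl⟩, hleast⟩ :=
    ((hp.comp norm).compact_of_continuous hc hf.norm).exists_isLeast (range_nonempty _)
  exact ⟨‖f x₀‖, norm_pos_iff.mpr (h0 x₀), fun x => hleast ⟨x, rfl⟩⟩

end Function.Periodic

theorem exists_pos_forall_norm_sub_sub_smul_deriv_le {F : Type*} [NormedAddCommGroup F]
    [NormedSpace ℝ F] {f : ℝ → F} (hf : Differentiable ℝ f) (hf' : UniformContinuous (deriv f))
    {η : ℝ} (hη : 0 < η) :
    ∃ r > 0, ∀ s t, |t - s| < r → ‖f t - f s - (t - s) • deriv f s‖ ≤ η * |t - s| := by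
  obtain ⟨r, hr, h⟩ := Metric.uniformContinuous_iff.mp hf' η hη
  refine ⟨r, hr, fun s t hst => ?_⟩
  have hg : ∀ u ∈ uIcc s t,
      HasDerivWithinAt (fun u => f u - u • deriv f s) (deriv f u - deriv f s) (uIcc s t) u :=
    fun u _ => ((hf u).hasDerivAt.sub ((hasDerivAt_id u).smul_const _)).hasDerivWithinAt.congr_deriv
      (by simp)
  have hbound : ∀ u ∈ uIcc s t, ‖deriv f u - deriv f s‖ ≤ η := fun u hu =>
    by simpa only [dist_eq_norm] using (h ((abs_sub_left_of_mem_uIcc hu).trans_lt hst)).le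
  have := (convex_uIcc s t).norm_image_sub_le_of_norm_hasDerivWithin_le hg hbound
    left_mem_uIcc right_mem_uIcc
  rw [Real.norm_eq_abs] at this
  convert this using 2
  rw [sub_smul]; abel

variable {E : Type*} [NormedAddCommGroup E] [InnerProductSpace ℂ E]

theorem norm_smul_le_of_norm_smul_add_eq_one {p w : E} {z : ℂ} (hp : ‖p‖ = 1)
    (hx : ‖z • w + p‖ = 1) : ‖z • w‖ ≤ 2 * ‖⟪p, w⟫_ℂ‖ / ‖w‖ := by
  rcases eq_or_ne w 0 with rfl | hw
  · simp
  have hsq : ‖z • w‖ ^ 2 = -2 * (⟪p, z • w⟫_ℂ).re := by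
    have := norm_add_sq (𝕜 := ℂ) p (z • w)
    rw [add_comm p, hx, hp] at this
    simp only [RCLike.re_to_complex] at this
    linarith
  have hre : -(⟪p, z • w⟫_ℂ).re ≤ ‖z‖ * ‖⟪p, w⟫_ℂ‖ := by
    rw [inner_smul_right, ← norm_mul]
    exact (neg_le_abs _).trans (Complex.abs_re_le_norm _)
  rw [le_div_iff₀ (norm_pos_iff.mpr hw)]
  rw [norm_smul] at hsq ⊢
  rcases (norm_nonneg z).eq_or_lt with hz | hz
  · rw [← hz, zero_mul, zero_mul]; positivity
  · nlinarith [norm_nonneg w]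

theorem diam_affineSpan_pair_inter_sphere_le {p q : E} (hp : ‖p‖ = 1) :
    Metric.diam ((affineSpan ℂ ({p, q} : Set E) : Set E) ∩ {x | ‖x‖ = 1})
      ≤ 4 * ‖⟪p, q - p⟫_ℂ‖ / ‖q - p‖ := by
  have hclose : ∀ x ∈ (affineSpan ℂ ({p, q} : Set E) : Set E) ∩ {x | ‖x‖ = 1},
      ‖x - p‖ ≤ 2 * ‖⟪p, q - p⟫_ℂ‖ / ‖q - p‖ := by
    rintro x ⟨hx, hx1⟩
    obtain ⟨z, rfl⟩ := mem_affineSpan_pair_iff_exists_lineMap_eq.mp hx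
    rw [AffineMap.lineMap_apply_module'] at hx1 ⊢
    rw [add_sub_cancel_right]
    exact norm_smul_le_of_norm_smul_add_eq_one hp hx1
  refine Metric.diam_le_of_forall_dist_le (by positivity) fun x hx y hy => ?_
  calc dist x y ≤ ‖x - p‖ + ‖y - p‖ := by
        rw [dist_eq_norm, ← sub_sub_sub_cancel_right x y p]; exact norm_sub_le _ _
    _ ≤ 2 * ‖⟪p, q - p⟫_ℂ‖ / ‖q - p‖ + 2 * ‖⟪p, q - p⟫_ℂ‖ / ‖q - p‖ :=
        add_le_add (hclose x hx) (hclose y hy)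
    _ = 4 * ‖⟪p, q - p⟫_ℂ‖ / ‖q - p‖ := by ring

theorem norm_inner_sub_self_le {p q : E} (hp : ‖p‖ = 1) (hq : ‖q‖ = 1) :
    ‖⟪p, q - p⟫_ℂ‖ ≤ ‖q - p‖ ^ 2 / 2 + |(⟪p, q⟫_ℂ).im| := by
  have hpp : ⟪p, p⟫_ℂ = 1 := by rw [inner_self_eq_norm_sq_to_K, hp]; norm_num
  have hre : (⟪p, q⟫_ℂ).re = 1 - ‖q - p‖ ^ 2 / 2 := by
    have := norm_sub_sq (𝕜 := ℂ) q p
    rw [hp, hq, inner_re_symm] at this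
    simp only [RCLike.re_to_complex] at this
    linarith
  rw [inner_sub_right, hpp]
  refine (Complex.norm_le_abs_re_add_abs_im _).trans_eq ?_
  rw [Complex.sub_re, Complex.sub_im, hre]
  simp [abs_of_nonneg (by positivity : (0 : ℝ) ≤ ‖q - p‖ ^ 2 / 2)]

theorem abs_im_inner_le_of_norm_sub_sub_smul_le {p q v : E} {c κ : ℝ} (hp : ‖p‖ = 1)
    (hv : ⟪p, v⟫_ℂ = 0) (hκ₀ : 0 ≤ κ) (hκ : κ ≤ 1 / 2) (h : ‖q - p - c • v‖ ≤ κ * ‖c • v‖) :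
    |(⟪p, q⟫_ℂ).im| ≤ 2 * κ * ‖q - p‖ := by
  have hsplit : ⟪p, q⟫_ℂ = ⟪p, q - p - c • v⟫_ℂ + ⟪p, p⟫_ℂ := by
    rw [inner_sub_right, inner_sub_right, inner_smul_right_eq_smul, hv, smul_zero]; ring
  have hpp : (⟪p, p⟫_ℂ).im = 0 := inner_self_im (𝕜 := ℂ) p
  have him : |(⟪p, q⟫_ℂ).im| ≤ ‖q - p - c • v‖ := by
    rw [hsplit, Complex.add_im, hpp, add_zero]
    refine (Complex.abs_im_le_norm _).trans ?_
    simpa only [hp, one_mul] using norm_inner_le_norm (𝕜 := ℂ) p (q - p - c • v)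
  have hcv : ‖c • v‖ ≤ ‖q - p‖ + ‖q - p - c • v‖ := by
    simpa only [sub_sub_cancel] using norm_sub_le (q - p) (q - p - c • v)
  have hcv' : ‖c • v‖ ≤ 2 * ‖q - p‖ := by
    nlinarith [mul_nonneg (sub_nonneg.2 hκ) (norm_nonneg (c • v))]
  nlinarith [mul_le_mul_of_nonneg_left hcv' hκ₀]

/-- Let `γ : ℝ → ℂ²` be a `C¹`, 1-periodic parametrization of a Legendrian knot on
the unit sphere: `γ` is injective on `[0,1)`, `‖γ s‖ = 1` everywhere, `γ′ s ≠ 0`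
everywhere, and `⟪γ s, γ′ s⟫_ℂ = 0` everywhere. Then for every `ε > 0` there is a
`δ > 0` such that whenever `‖γ s - γ t‖ < δ`, the diameter of the intersection of
the affine ℂ-span of `{γ s, γ t}` with the unit sphere is less than `ε`. -/
theorem stmt5 (γ : ℝ → EuclideanSpace ℂ (Fin 2))
    (hC1 : ContDiff ℝ 1 γ)
    (hper : ∀ s : ℝ, γ (s + 1) = γ s)
    (hinj : Set.InjOn γ (Set.Ico (0 : ℝ) 1))
    (hsphere : ∀ s, ‖γ s‖ = 1)
    (hreg : ∀ s, deriv γ s ≠ 0)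
    (hleg : ∀ s, ⟪γ s, deriv γ s⟫ = 0) :
    ∀ ε > 0, ∃ δ > 0, ∀ s t : ℝ, ‖γ s - γ t‖ < δ →
      Metric.diam
        ((affineSpan ℂ ({γ s, γ t} : Set (EuclideanSpace ℂ (Fin 2))) :
            Set (EuclideanSpace ℂ (Fin 2))) ∩ {x | ‖x‖ = 1}) < ε := by
  intro ε hε
  have hper' : Periodic (deriv γ) 1 := Periodic.deriv hper
  have hγ' : Continuous (deriv γ) := hC1.continuous_deriv le_rfl
  obtain ⟨m, hm, hm_le⟩ := hper'.exists_pos_le_norm one_ne_zero hγ' hreg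
  set κ : ℝ := min (1 / 2) (ε / 16)
  have hκ₀ : 0 < κ := by positivity
  obtain ⟨r, hr, htaylor⟩ := exists_pos_forall_norm_sub_sub_smul_deriv_le
    (hC1.differentiable one_ne_zero) (hper'.uniformContinuous hγ') (mul_pos hκ₀ hm)
  obtain ⟨δ, hδ, hround⟩ := Periodic.exists_pos_forall_abs_sub_round_lt hper hC1.continuous hinj hr
  refine ⟨min δ (ε / 4), by positivity, fun s t hst => ?_⟩
  set t' := t + round (s - t)
  have hγt' : γ t' = γ t := by simpa using (Periodic.int_mul hper (round (s - t))) t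
  have hst' : |t' - s| < r := by
    rw [abs_sub_comm, show s - t' = s - t - round (s - t) by ring]
    exact hround s t (by rw [dist_eq_norm]; exact hst.trans_le (min_le_left _ _))
  have hT : ‖γ t - γ s - (t' - s) • deriv γ s‖ ≤ κ * ‖(t' - s) • deriv γ s‖ := by
    rw [← hγt', norm_smul, Real.norm_eq_abs]
    calc _ ≤ κ * m * |t' - s| := htaylor s t' hst'
      _ = κ * (|t' - s| * m) := by ring
      _ ≤ κ * (|t' - s| * ‖deriv γ s‖) := by gcongr; exact hm_le s
  have him := abs_im_inner_le_of_norm_sub_sub_smul_le (hsphere s) (hleg s) hκ₀.le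
    (min_le_left _ _) hT
  have hinner := norm_inner_sub_self_le (hsphere s) (hsphere t)
  have hd : ‖γ t - γ s‖ < ε / 4 := by rw [norm_sub_rev]; exact hst.trans_le (min_le_right _ _)
  calc Metric.diam _ ≤ 4 * ‖⟪γ s, γ t - γ s⟫_ℂ‖ / ‖γ t - γ s‖ :=
        diam_affineSpan_pair_inter_sphere_le (hsphere s)
    _ ≤ 2 * ‖γ t - γ s‖ + 8 * κ :=
        div_le_of_le_mul₀ (norm_nonneg _) (by positivity) (by linarith)
    _ < ε := by linarith [min_le_right (1 / 2) (ε / 16)]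
end

section
/- Let L₁, …, L_k be pairwise distinct affine ℝ-lines in ℝ², each meeting the open unit disk {x : ‖x‖ < 1}, such that no two of them intersect at a point of the unit circle {x : ‖x‖ = 1}. Then for every ε > 0 there exist vectors w₁, …, w_k ∈ ℝ² with ‖w_i‖ < ε for all i, such that the translated lines L_i + w_i are pairwise distinct, each meets the open unit disk, no two of them intersect at a point of the unit circle, and no point of ℝ² lies on three (or more) of the lines L_i + w_i (i.e. the translated arrangement is in general position: every node has degree 2). -/
def IsRealAffineLine (L : Set (EuclideanSpace ℝ (Fin 2))) : Prop :=
  ∃ a v : EuclideanSpace ℝ (Fin 2), v ≠ 0 ∧ L = {x | ∃ t : ℝ, x = a + t • v}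

/-!
Every line is a level set `f ⁻¹' {c}` of a nonzero linear functional, and translating it
amounts to moving the level `c` to a nearby `d`. Meeting the open disk, and avoiding the
compact sets `Lⱼ ∩ S¹` of the other lines, are open conditions on `d` that hold at `d = c`;
coinciding with another line, or passing through one of the finitely many double points of the
lines treated so far, excludes only finitely many `d`. Moving the lines one at a time by
arbitrarily small amounts therefore keeps the arrangement hyperbolic and removes all triple
points.
-/

open Filter Topology Function Set

section LevelSets

variable {X Y : Type*} [TopologicalSpace Y] {f : X → Y} {c : Y}

lemma eventually_preimage_singleton_inter_eq_empty [TopologicalSpace X] [T2Space Y]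
    (hf : Continuous f) {K : Set X} (hK : IsCompact K) (h : f ⁻¹' {c} ∩ K = ∅) :
    ∀ᶠ d in 𝓝 c, f ⁻¹' {d} ∩ K = ∅ := by
  have hc : c ∉ f '' K := by
    rintro ⟨x, hxK, hx⟩
    exact h.subset ⟨hx, hxK⟩
  filter_upwards [(hK.image hf).isClosed.isOpen_compl.mem_nhds hc] with d hd
  exact eq_empty_of_forall_notMem fun x ⟨hx, hxK⟩ => hd ⟨x, hxK, hx⟩

lemma IsOpenMap.eventually_preimage_singleton_inter_nonempty [TopologicalSpace X]
    (hf : IsOpenMap f) {U : Set X} (hU : IsOpen U) (h : (f ⁻¹' {c} ∩ U).Nonempty) :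
    ∀ᶠ d in 𝓝 c, (f ⁻¹' {d} ∩ U).Nonempty := by
  obtain ⟨x, hx, hxU⟩ := h
  filter_upwards [(hf U hU).mem_nhds ⟨x, hxU, hx⟩] with d ⟨y, hyU, hy⟩
  exact ⟨y, hy, hyU⟩

lemma Set.Finite.eventually_preimage_singleton_inter_eq_empty [T1Space Y] {P : Set X}
    (hP : P.Finite) : ∀ᶠ d in 𝓝[≠] c, f ⁻¹' {d} ∩ P = ∅ := by
  filter_upwards [(hP.image f).eventually_cofinite_notMem.filter_mono (nhdsNE_le_cofinite c)]
    with d hd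
  exact eq_empty_of_forall_notMem fun x ⟨hx, hxP⟩ => hd ⟨x, hxP, hx⟩

lemma Function.Surjective.eventually_preimage_singleton_ne [T1Space Y] (hf : Surjective f)
    (S : Set X) : ∀ᶠ d in 𝓝[≠] c, f ⁻¹' {d} ≠ S := by
  have : {d | f ⁻¹' {d} = S}.Subsingleton := fun d hd d' hd' =>
    singleton_injective (hf.preimage_injective (hd.trans hd'.symm))
  exact this.finite.eventually_cofinite_notMem.filter_mono (nhdsNE_le_cofinite c)

end LevelSets

section Hyperplanes

variable {E : Type*} [NormedAddCommGroup E] [NormedSpace ℝ E]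

lemma image_add_preimage_singleton (f : E →L[ℝ] ℝ) (c : ℝ) (w : E) :
    (· + w) '' (f ⁻¹' {c}) = f ⁻¹' {c + f w} := by
  ext x
  simp [image_add_right, ← sub_eq_add_neg, sub_eq_iff_eq_add]

lemma eventually_exists_image_add_preimage_eq {f : E →L[ℝ] ℝ} (hf : f ≠ 0) (c : ℝ) {δ : ℝ}
    (hδ : 0 < δ) : ∀ᶠ d in 𝓝 c, ∃ w : E, ‖w‖ < δ ∧ (· + w) '' (f ⁻¹' {c}) = f ⁻¹' {d} := by
  obtain ⟨u, hu⟩ := ContinuousLinearMap.exists_ne_zero hf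
  have hlim : Tendsto (fun d : ℝ => (d - c) • (f u)⁻¹ • u) (𝓝 c) (𝓝 0) := by
    simpa using (by fun_prop : Continuous fun d : ℝ => (d - c) • (f u)⁻¹ • u).tendsto c
  filter_upwards [hlim (Metric.ball_mem_nhds 0 hδ)] with d hd
  refine ⟨_, mem_ball_zero_iff.1 hd, ?_⟩
  rw [image_add_preimage_singleton]
  simp [hu]

lemma ContinuousLinearMap.surjective_of_ne_zero {f : E →L[ℝ] ℝ} (hf : f ≠ 0) : Surjective f :=
  LinearMap.surjective (f := (f : E →ₗ[ℝ] ℝ))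
    (by rwa [ne_eq, ← ContinuousLinearMap.toLinearMap_zero, ContinuousLinearMap.coe_inj])

end Hyperplanes

section Lines

variable {E : Type*}

lemma setOf_add_smul_eq_of_mem [AddCommGroup E] [Module ℝ E] {a v p q : E}
    (hp : ∃ t : ℝ, p = a + t • v) (hq : ∃ t : ℝ, q = a + t • v) (hpq : p ≠ q) :
    {x | ∃ t : ℝ, x = a + t • v} = {x | ∃ t : ℝ, x = p + t • (q - p)} := by
  obtain ⟨s, rfl⟩ := hp
  obtain ⟨r, rfl⟩ := hq
  have hrs : r - s ≠ 0 := sub_ne_zero.2 fun h => hpq (by rw [h])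
  have hqp : a + r • v - (a + s • v) = (r - s) • v := by module
  ext x
  constructor
  · rintro ⟨t, rfl⟩
    refine ⟨(t - s) / (r - s), ?_⟩
    rw [hqp, smul_smul, div_mul_cancel₀ _ hrs]
    module
  · rintro ⟨t, rfl⟩
    exact ⟨s + t * (r - s), by rw [hqp]; module⟩

lemma exists_setOf_add_smul_eq_preimage [NormedAddCommGroup E] [NormedSpace ℝ E]
    [FiniteDimensional ℝ E] (hE : Module.finrank ℝ E = 2) (a : E) {v : E} (hv : v ≠ 0) :
    ∃ f : E →L[ℝ] ℝ, f ≠ 0 ∧ {x | ∃ t : ℝ, x = a + t • v} = f ⁻¹' {f a} := by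
  have hspan : Module.finrank ℝ (ℝ ∙ v) = 1 := finrank_span_singleton hv
  have hlt : ℝ ∙ v < ⊤ := by
    refine lt_top_iff_ne_top.2 fun h => ?_
    rw [h, finrank_top, hE] at hspan
    exact absurd hspan (by norm_num)
  obtain ⟨f, hf, hle⟩ := (ℝ ∙ v).exists_le_ker_of_lt_top hlt
  have hker : ℝ ∙ v = LinearMap.ker f := by
    refine Submodule.eq_of_le_of_finrank_eq hle ?_
    have := Module.Dual.finrank_ker_add_one_of_ne_zero hf
    omega
  refine ⟨LinearMap.toContinuousLinearMap f, fun h => hf ?_, ?_⟩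
  · ext x
    simpa using congr($h x)
  ext x
  simp only [mem_ofPred_eq, mem_preimage, mem_singleton_iff, LinearMap.coe_toContinuousLinearMap']
  rw [← sub_eq_zero, ← map_sub, ← LinearMap.mem_ker, ← hker, Submodule.mem_span_singleton]
  constructor
  · rintro ⟨t, rfl⟩
    exact ⟨t, by module⟩
  · rintro ⟨t, ht⟩
    exact ⟨t, by rw [ht]; module⟩

end Lines

namespace IsRealAffineLine

variable {L M : Set (EuclideanSpace ℝ (Fin 2))}

lemma exists_eq_preimage (hL : IsRealAffineLine L) :
    ∃ f : EuclideanSpace ℝ (Fin 2) →L[ℝ] ℝ, f ≠ 0 ∧ ∃ c, L = f ⁻¹' {c} := by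
  obtain ⟨a, v, hv, rfl⟩ := hL
  obtain ⟨f, hf, hfL⟩ := exists_setOf_add_smul_eq_preimage (finrank_euclideanSpace_fin) a hv
  exact ⟨f, hf, f a, hfL⟩

lemma isClosed (hL : IsRealAffineLine L) : IsClosed L := by
  obtain ⟨f, -, c, rfl⟩ := hL.exists_eq_preimage
  exact isClosed_singleton.preimage f.continuous

lemma image_add (hL : IsRealAffineLine L) (w : EuclideanSpace ℝ (Fin 2)) :
    IsRealAffineLine ((· + w) '' L) := by
  obtain ⟨a, v, hv, rfl⟩ := hL
  refine ⟨a + w, v, hv, ?_⟩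
  ext x
  constructor
  · rintro ⟨y, ⟨t, rfl⟩, rfl⟩
    exact ⟨t, by module⟩
  · rintro ⟨t, rfl⟩
    exact ⟨a + t • v, ⟨t, rfl⟩, by module⟩

lemma inter_subsingleton (hL : IsRealAffineLine L) (hM : IsRealAffineLine M) (hLM : L ≠ M) :
    (L ∩ M).Subsingleton := by
  rintro p ⟨hpL, hpM⟩ q ⟨hqL, hqM⟩
  by_contra hpq
  obtain ⟨a, v, -, rfl⟩ := hL
  obtain ⟨b, u, -, rfl⟩ := hM
  exact hLM ((setOf_add_smul_eq_of_mem hpL hqL hpq).trans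
    (setOf_add_smul_eq_of_mem hpM hqM hpq).symm)

end IsRealAffineLine

lemma Pairwise.update_of_symmetric {α β : Type*} [DecidableEq α] {r : β → β → Prop}
    (hr : ∀ a b, r a b → r b a) {f : α → β} (hf : Pairwise (r on f)) {i : α} {b : β}
    (hb : ∀ j ≠ i, r b (f j)) : Pairwise (r on update f i b) := by
  intro j l hjl
  by_cases hj : j = i
  · subst hj
    simpa [onFun, update_of_ne hjl.symm] using hb l hjl.symm
  by_cases hl : l = i
  · subst hl
    simpa [onFun, update_of_ne hj] using hr _ _ (hb j hj)
  simpa [onFun, update_of_ne hj, update_of_ne hl] using hf hjl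

section GeneralPosition

variable {ι E : Type*}

def IsGeneralPositionOn (A : ι → Set E) (s : Set ι) : Prop :=
  ∀ x, {j ∈ s | x ∈ A j}.encard ≤ 2

lemma IsGeneralPositionOn.no_triple_point {A : ι → Set E} {s : Set ι}
    (hA : IsGeneralPositionOn A s) {i j l : ι} (hi : i ∈ s) (hj : j ∈ s) (hl : l ∈ s)
    (hij : i ≠ j) (hil : i ≠ l) (hjl : j ≠ l) (x : E) : ¬(x ∈ A i ∧ x ∈ A j ∧ x ∈ A l) := by
  rintro ⟨hxi, hxj, hxl⟩
  have hsub : {i, j, l} ⊆ {m ∈ s | x ∈ A m} := by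
    rintro m (rfl | rfl | rfl) <;> simp_all
  have := (encard_le_encard hsub).trans (hA x)
  rw [encard_eq_three.2 ⟨i, j, l, hij, hil, hjl, rfl⟩] at this
  exact absurd this (by norm_num)

lemma IsGeneralPositionOn.update_insert [DecidableEq ι] {A : ι → Set E} {s : Set ι}
    (hA : IsGeneralPositionOn A s) {i : ι} (hi : i ∉ s) {ℓ : Set E}
    (hℓ : ∀ x ∈ ℓ, {j ∈ s | x ∈ A j}.encard ≤ 1) :
    IsGeneralPositionOn (update A i ℓ) (insert i s) := by
  intro x
  have hs : {j ∈ s | x ∈ update A i ℓ j} = {j ∈ s | x ∈ A j} := by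
    ext j
    simp only [mem_sep_iff]
    exact and_congr_right fun hj => by rw [update_of_ne (ne_of_mem_of_not_mem hj hi)]
  by_cases hx : x ∈ ℓ
  · have : {j ∈ insert i s | x ∈ update A i ℓ j} = insert i {j ∈ s | x ∈ A j} := by
      rw [← hs]; ext j; by_cases j = i <;> simp_all
    rw [this, encard_insert_of_notMem fun h => hi h.1]
    exact (add_le_add_left (hℓ x hx) 1).trans_eq one_add_one_eq_two
  · have : {j ∈ insert i s | x ∈ update A i ℓ j} = {j ∈ s | x ∈ A j} := by
      rw [← hs]; ext j; by_cases j = i <;> simp_all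
    rw [this]
    exact hA x

lemma setOf_one_lt_encard_finite [Finite ι] {A : ι → Set E}
    (hA : Pairwise fun i j => (A i ∩ A j).Finite) (s : Set ι) :
    {x | 1 < {j ∈ s | x ∈ A j}.encard}.Finite := by
  refine (finite_iUnion fun p : {p : ι × ι // p.1 ≠ p.2} => hA p.2).subset fun x hx => ?_
  obtain ⟨i, j, ⟨-, hi⟩, ⟨-, hj⟩, hij⟩ := one_lt_encard_iff.1 hx
  exact mem_iUnion.2 ⟨⟨(i, j), hij⟩, hi, hj⟩

end GeneralPosition

def translateFamily {ι E : Type*} [Add E] (A : ι → Set E) (w : ι → E) : ι → Set E :=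
  fun i => (· + w i) '' A i

@[simp]
lemma translateFamily_zero {ι E : Type*} [AddZeroClass E] (A : ι → Set E) :
    translateFamily A 0 = A := by
  funext i
  simp [translateFamily]

lemma translateFamily_update_add {ι E : Type*} [AddSemigroup E] [DecidableEq ι] (A : ι → Set E)
    (w : ι → E) (i : ι) (u : E) :
    translateFamily A (update w i (w i + u)) =
      update (translateFamily A w) i ((· + u) '' translateFamily A w i) := by
  funext j
  rcases eq_or_ne j i with rfl | hj
  · simp [translateFamily, image_image, add_assoc]
  · simp [translateFamily, update_of_ne hj]

structure IsHyperbolicArrangement {ι : Type*} (A : ι → Set (EuclideanSpace ℝ (Fin 2))) :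
    Prop where
  isRealAffineLine : ∀ i, IsRealAffineLine (A i)
  meets_disk : ∀ i, (A i ∩ {x | ‖x‖ < 1}).Nonempty
  pairwise : Pairwise fun i j => A i ≠ A j ∧ A i ∩ A j ∩ {x | ‖x‖ = 1} = ∅

namespace IsHyperbolicArrangement

variable {ι : Type*} {A : ι → Set (EuclideanSpace ℝ (Fin 2))}

lemma update [DecidableEq ι] (hA : IsHyperbolicArrangement A) {i : ι}
    {ℓ : Set (EuclideanSpace ℝ (Fin 2))} (hℓ : IsRealAffineLine ℓ)
    (hdisk : (ℓ ∩ {x | ‖x‖ < 1}).Nonempty)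
    (hpair : ∀ j ≠ i, ℓ ≠ A j ∧ ℓ ∩ A j ∩ {x | ‖x‖ = 1} = ∅) :
    IsHyperbolicArrangement (Function.update A i ℓ) where
  isRealAffineLine j := by
    rcases eq_or_ne j i with rfl | hj
    · simpa using hℓ
    · simpa [update_of_ne hj] using hA.isRealAffineLine j
  meets_disk j := by
    rcases eq_or_ne j i with rfl | hj
    · simpa using hdisk
    · simpa [update_of_ne hj] using hA.meets_disk j
  pairwise := Pairwise.update_of_symmetric (r := fun X Y => X ≠ Y ∧ X ∩ Y ∩ {x | ‖x‖ = 1} = ∅)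
    (fun _ Y h => ⟨h.1.symm, by rw [inter_comm Y]; exact h.2⟩) hA.pairwise hpair

lemma setOf_one_lt_encard_finite [Finite ι] (hA : IsHyperbolicArrangement A) (s : Set ι) :
    {x | 1 < {j ∈ s | x ∈ A j}.encard}.Finite :=
  _root_.setOf_one_lt_encard_finite (fun _ _ hij => ((hA.isRealAffineLine _).inter_subsingleton
    (hA.isRealAffineLine _) (hA.pairwise hij).1).finite) s

lemma exists_update_image_add [Finite ι] [DecidableEq ι] (hA : IsHyperbolicArrangement A)
    {s : Set ι} (hs : IsGeneralPositionOn A s) {i : ι} (hi : i ∉ s) {δ : ℝ} (hδ : 0 < δ) :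
    ∃ w, ‖w‖ < δ ∧ IsHyperbolicArrangement (Function.update A i ((· + w) '' A i)) ∧
      IsGeneralPositionOn (Function.update A i ((· + w) '' A i)) (insert i s) := by
  obtain ⟨f, hf, c, hAi⟩ := (hA.isRealAffineLine i).exists_eq_preimage
  set P := {x | 1 < {j ∈ s | x ∈ A j}.encard}
  have hcircle : ∀ j, IsCompact (A j ∩ {x | ‖x‖ = 1}) := fun j => by
    simpa [Metric.sphere] using
      (isCompact_sphere 0 1).inter_left (hA.isRealAffineLine j).isClosed
  -- The level `c` itself must be excluded: `A i` may pass through points of `P`.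
  have hgood : ∀ᶠ d in 𝓝[≠] c,
      (∃ w, ‖w‖ < δ ∧ (· + w) '' A i = f ⁻¹' {d}) ∧ (f ⁻¹' {d} ∩ {x | ‖x‖ < 1}).Nonempty ∧
      (∀ j ≠ i, f ⁻¹' {d} ≠ A j ∧ f ⁻¹' {d} ∩ A j ∩ {x | ‖x‖ = 1} = ∅) ∧
      f ⁻¹' {d} ∩ P = ∅ := by
    refine .and ?_ (.and ?_ (.and ?_
      (hA.setOf_one_lt_encard_finite s).eventually_preimage_singleton_inter_eq_empty))
    · rw [hAi]
      exact eventually_nhdsWithin_of_eventually_nhds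
        (eventually_exists_image_add_preimage_eq hf c hδ)
    · refine eventually_nhdsWithin_of_eventually_nhds ?_
      exact (f.isOpenMap_of_ne_zero hf).eventually_preimage_singleton_inter_nonempty
        (isOpen_lt continuous_norm continuous_const) (hAi ▸ hA.meets_disk i)
    · refine eventually_all.2 fun j => ?_
      rcases eq_or_ne j i with rfl | hji
      · exact .of_forall fun _ h => absurd rfl h
      have hsep : f ⁻¹' {c} ∩ (A j ∩ {x | ‖x‖ = 1}) = ∅ := by
        rw [← inter_assoc, ← hAi]; exact (hA.pairwise hji.symm).2
      filter_upwards [(f.surjective_of_ne_zero hf).eventually_preimage_singleton_ne (A j),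
        eventually_nhdsWithin_of_eventually_nhds
          (eventually_preimage_singleton_inter_eq_empty f.continuous (hcircle j) hsep)]
        with d hne hd _
      exact ⟨hne, by rw [inter_assoc]; exact hd⟩
  obtain ⟨d, ⟨w, hw, hwd⟩, hdisk, hpair, hP⟩ := hgood.exists
  have hℓ : IsRealAffineLine (f ⁻¹' {d}) := hwd ▸ (hA.isRealAffineLine i).image_add w
  refine ⟨w, hw, ?_⟩
  rw [hwd]
  exact ⟨hA.update hℓ hdisk hpair,
    hs.update_insert hi fun x hx => not_lt.1 fun h => hP.subset ⟨hx, h⟩⟩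

theorem exists_translateFamily_isGeneralPositionOn [Finite ι] (hA : IsHyperbolicArrangement A)
    (s : Set ι) {ε : ℝ} (hε : 0 < ε) : ∃ w : ι → EuclideanSpace ℝ (Fin 2), (∀ j, ‖w j‖ < ε) ∧
      IsHyperbolicArrangement (translateFamily A w) ∧
      IsGeneralPositionOn (translateFamily A w) s := by
  classical
  induction s, s.toFinite using Set.Finite.induction_on generalizing ε with
  | empty =>
    exact ⟨0, fun _ => by simpa using hε, by simpa using hA, fun x => by simp⟩
  | @insert i s hi _ ih =>
    obtain ⟨w, hw, hB, hBs⟩ := ih (half_pos hε)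
    obtain ⟨u, hu, hB', hB's⟩ := hB.exists_update_image_add hBs hi (half_pos hε)
    refine ⟨Function.update w i (w i + u), fun j => ?_, ?_, ?_⟩
    · rcases eq_or_ne j i with rfl | hj
      · simpa using
          (norm_add_le _ _).trans_lt (add_lt_add (hw j) hu) |>.trans_eq (add_halves ε)
      · simpa [update_of_ne hj] using (hw j).trans (half_lt_self hε)
    all_goals rwa [translateFamily_update_add]

end IsHyperbolicArrangement

/-- Any hyperbolic ℝ-line arrangement (pairwise distinct affine ℝ-lines meeting the
open unit disk, no two of which meet on the unit circle) admits arbitrarily small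
translations putting it in general position: the translated lines are pairwise
distinct, each meets the open unit disk, no two meet on the unit circle, and no
point lies on three of them. -/
theorem stmt11 (k : ℕ) (L : Fin k → Set (EuclideanSpace ℝ (Fin 2)))
    (hline : ∀ i, IsRealAffineLine (L i))
    (hdist : ∀ i j, i ≠ j → L i ≠ L j)
    (hball : ∀ i, (L i ∩ {x | ‖x‖ < 1}).Nonempty)
    (hpar : ∀ i j, i ≠ j → L i ∩ L j ∩ {x | ‖x‖ = 1} = ∅) :
    ∀ ε > 0, ∃ w : Fin k → EuclideanSpace ℝ (Fin 2),
      (∀ i, ‖w i‖ < ε) ∧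
      (∀ i j, i ≠ j → (fun x => x + w i) '' L i ≠ (fun x => x + w j) '' L j) ∧
      (∀ i, (((fun x => x + w i) '' L i) ∩ {x | ‖x‖ < 1}).Nonempty) ∧
      (∀ i j, i ≠ j →
        ((fun x => x + w i) '' L i) ∩ ((fun x => x + w j) '' L j) ∩ {x | ‖x‖ = 1} = ∅) ∧
      (∀ x : EuclideanSpace ℝ (Fin 2), ∀ i j l : Fin k, i ≠ j → i ≠ l → j ≠ l →
        ¬(x ∈ (fun y => y + w i) '' L i ∧ x ∈ (fun y => y + w j) '' L j ∧
          x ∈ (fun y => y + w l) '' L l)) := by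
  intro ε hε
  have hL : IsHyperbolicArrangement L :=
    ⟨hline, hball, fun i j hij => ⟨hdist i j hij, hpar i j hij⟩⟩
  obtain ⟨w, hw, hB, hBgp⟩ := hL.exists_translateFamily_isGeneralPositionOn univ hε
  exact ⟨w, hw, fun i j hij => (hB.pairwise hij).1, hB.meets_disk,
    fun i j hij => (hB.pairwise hij).2,
    fun x i j l hij hil hjl =>
      hBgp.no_triple_point (mem_univ i) (mem_univ j) (mem_univ l) hij hil hjl x⟩
end
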